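/- Let {ι,κ} = {σ,τ}, let π be an irreducible generic representation of GL_n(E), and let ψ be a non-degenerate character of N(E) with ψ^κ = ψ. Then the linear form μ_κ on W(π,ψ) defined by μ_κ(W) = (1/|G_ι|)·Σ_{g∈X_κ} W(g) is a ψ-Whittaker functional: for every n ∈ N(E) and every W ∈ W(π,ψ), μ_κ(π(n)W) = ψ(n)·μ_κ(W). -/

import Mathlib

set_option linter.unusedSectionVars false

open Matrix Finset

noncomputable section

namespace TestVectors

variable {n : ℕ} {E : Type*} [Field E] [Fintype E] [DecidableEq E]

/-- The predicate of being an upper triangular unipotent matrix. -/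
def IsUniUp (g : GL (Fin n) E) : Prop :=
  (∀ i j : Fin n, j < i → (g : Matrix (Fin n) (Fin n) E) i j = 0) ∧
  (∀ i : Fin n, (g : Matrix (Fin n) (Fin n) E) i i = 1)

instance : DecidablePred (IsUniUp (n := n) (E := E)) := fun g => by
  unfold IsUniUp; exact @instDecidableAnd _ _ (@Fintype.decidableForallFintype _ _ (fun _ => Fintype.decidableForallFintype) _) inferInstance

/-- The group `N(E)` of upper triangular unipotent matrices, as a finset. -/
def uniFinset (n : ℕ) (E : Type*) [Field E] [Fintype E] [DecidableEq E] :
    Finset (GL (Fin n) E) := Finset.univ.filter IsUniUp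

/-- The entrywise action of a field automorphism on `GL_n`. -/
def entrywiseHom (n : ℕ) (σ₀ : E ≃+* E) : GL (Fin n) E →* GL (Fin n) E :=
  Units.map (RingHom.mapMatrix (σ₀ : E →+* E)).toMonoidHom

/-- transpose, as a map `GL_n → GL_n`. -/
def transposeGL (g : GL (Fin n) E) : GL (Fin n) E where
  val := (g : Matrix (Fin n) (Fin n) E)ᵀ
  inv := ((g⁻¹ : GL (Fin n) E) : Matrix (Fin n) (Fin n) E)ᵀ
  val_inv := by
    rw [← Matrix.transpose_mul, ← Units.val_mul, inv_mul_cancel, Units.val_one,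
      Matrix.transpose_one]
  inv_val := by
    rw [← Matrix.transpose_mul, ← Units.val_mul, mul_inv_cancel, Units.val_one,
      Matrix.transpose_one]

lemma transposeGL_mul (g h : GL (Fin n) E) :
    transposeGL (g * h) = transposeGL h * transposeGL g := by
  ext
  simp [transposeGL, Matrix.transpose_mul]

lemma transposeGL_one : transposeGL (1 : GL (Fin n) E) = 1 := by
  ext; simp [transposeGL]

/-- The antidiagonal permutation matrix `J`. -/
def Jmat (n : ℕ) (E : Type*) [Field E] : Matrix (Fin n) (Fin n) E :=
  Matrix.of fun i j => if j = i.rev then 1 else 0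

lemma Jmat_mul_Jmat : Jmat n E * Jmat n E = 1 := by
  ext i k
  simp only [Jmat, Matrix.mul_apply, Matrix.of_apply, Matrix.one_apply, ite_mul, one_mul,
    zero_mul]
  rw [Finset.sum_eq_single i.rev]
  · simp [Fin.rev_rev, eq_comm]
  · intro b _ hb; simp [hb]
  · simp

/-- The antidiagonal permutation matrix `J` as an element of `GL_n`. -/
def Jgl (n : ℕ) (E : Type*) [Field E] [Fintype E] [DecidableEq E] : GL (Fin n) E where
  val := Jmat n E
  inv := Jmat n E
  val_inv := Jmat_mul_Jmat
  inv_val := Jmat_mul_Jmat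

/-- The involution `τ : g ↦ J ᵗg^{-σ} J⁻¹` of `GL_n(E)`. -/
def tauHom (n : ℕ) (σ₀ : E ≃+* E) : GL (Fin n) E →* GL (Fin n) E where
  toFun g := Jgl n E * transposeGL ((entrywiseHom n σ₀ g)⁻¹) * (Jgl n E)⁻¹
  map_one' := by simp [transposeGL_one]
  map_mul' g h := by
    rw [show (entrywiseHom n σ₀) (g * h) = entrywiseHom n σ₀ g * entrywiseHom n σ₀ h from map_mul _ g h, _root_.mul_inv_rev, transposeGL_mul]
    group

/-- The subgroup of fixed points of an endomorphism of a group. -/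
def fixedSubgroup {G : Type*} [Group G] (φ : G →* G) : Subgroup G where
  carrier := {g | φ g = g}
  mul_mem' := by
    intro a b ha hb
    simp only [Set.mem_setOf_eq] at *
    rw [_root_.map_mul, ha, hb]
  one_mem' := map_one φ
  inv_mem' := by
    intro a ha
    simp only [Set.mem_setOf_eq] at *
    rw [_root_.map_inv, ha]

/-- The fixed points of an endomorphism of `GL_n(E)`, as a finset. -/
def fixFinset (φ : GL (Fin n) E →* GL (Fin n) E) : Finset (GL (Fin n) E) :=
  Finset.univ.filter fun g => φ g = g

/-- The set `X_φ` of "norm one" elements `g φ(g) = 1`, as a finset. -/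
def normOneFinset (φ : GL (Fin n) E →* GL (Fin n) E) : Finset (GL (Fin n) E) :=
  Finset.univ.filter fun g => g * φ g = 1

/-- `ψ` is a non-degenerate character of the group `N(E)` of upper triangular unipotent
matrices: it is multiplicative and non-vanishing on `N(E)`, and non-trivial on each simple
root subgroup. -/
def IsNondegChar (ψ : GL (Fin n) E → ℂ) : Prop :=
  (∀ u v : GL (Fin n) E, IsUniUp u → IsUniUp v → ψ (u * v) = ψ u * ψ v) ∧
  (∀ u : GL (Fin n) E, IsUniUp u → ψ u ≠ 0) ∧
  (∀ i : Fin n, ∀ h : (i : ℕ) + 1 < n,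
    ∃ u : GL (Fin n) E, IsUniUp u ∧
      (∀ a b : Fin n, a ≠ b → ¬(a = i ∧ b = ⟨(i : ℕ) + 1, h⟩) →
        (u : Matrix (Fin n) (Fin n) E) a b = 0) ∧
      ψ u ≠ 1)

section Reps

variable {G : Type*} [Group G] {V : Type*} [AddCommGroup V] [Module ℂ V]
  {W : Type*} [AddCommGroup W] [Module ℂ W]

/-- The character of a representation. -/
def repChar (ρ : Representation ℂ G V) (g : G) : ℂ :=
  LinearMap.trace ℂ V (ρ g)

/-- A submodule invariant under a representation. -/
def IsRepStable (ρ : Representation ℂ G V) (S : Submodule ℂ V) : Prop :=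
  ∀ g : G, ∀ v ∈ S, ρ g v ∈ S

/-- Irreducibility of a representation. -/
def IsIrreducibleRep (ρ : Representation ℂ G V) : Prop :=
  Nontrivial V ∧ ∀ S : Submodule ℂ V, IsRepStable ρ S → S = ⊥ ∨ S = ⊤

/-- Isomorphism of representations of a fixed group. -/
def RepIso (ρ : Representation ℂ G V) (π : Representation ℂ G W) : Prop :=
  ∃ e : V ≃ₗ[ℂ] W, ∀ g v, e (ρ g v) = π g (e v)

/-- A representation is distinguished by a subset `S` of the group if it admits a non-zero
vector invariant under `S`. -/
def IsDistinguished (ρ : Representation ℂ G V) (S : Set G) : Prop :=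
  ∃ v : V, v ≠ 0 ∧ ∀ g ∈ S, ρ g v = v

/-- The submodule of `S`-invariant vectors of a representation. -/
def invariantVectors (ρ : Representation ℂ G V) (S : Set G) : Submodule ℂ V where
  carrier := {v | ∀ g ∈ S, ρ g v = v}
  add_mem' := by
    intro a b ha hb g hg
    rw [_root_.map_add, ha g hg, hb g hg]
  zero_mem' := by
    intro g hg
    simp
  smul_mem' := by
    intro c a ha g hg
    rw [_root_.map_smul, ha g hg]

/-- The space of `S`-invariant linear forms on a representation. -/
def invariantForms (ρ : Representation ℂ G V) (S : Set G) : Submodule ℂ (V →ₗ[ℂ] ℂ) where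
  carrier := {L | ∀ g ∈ S, ∀ v, L (ρ g v) = L v}
  add_mem' := by
    intro a b ha hb g hg v
    simp [ha g hg v, hb g hg v]
  zero_mem' := by intro g hg v; simp
  smul_mem' := by
    intro c a ha g hg v
    simp [ha g hg v]

end Reps

/-- The (normalized) Bessel function of a representation `π` of `GL_n(E)` with respect to the
character `ψ` of `N(E)`: `B_π(g) = |N(E)|⁻¹ ∑_{u ∈ N(E)} ψ(u)⁻¹ χ_π(gu)`. -/
def Bessel {V : Type*} [AddCommGroup V] [Module ℂ V] (ψ : GL (Fin n) E → ℂ)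
    (π : Representation ℂ (GL (Fin n) E) V) (g : GL (Fin n) E) : ℂ :=
  ((uniFinset n E).card : ℂ)⁻¹ * ∑ u ∈ uniFinset n E, (ψ u)⁻¹ * repChar π (g * u)

/-- A representation of `GL_n(E)` is `ψ`-generic if it admits a non-zero `ψ`-Whittaker
functional, equivalently if it embeds in `Ind_{N(E)}^{GL_n(E)} ψ`. -/
def IsGeneric {V : Type*} [AddCommGroup V] [Module ℂ V] (ψ : GL (Fin n) E → ℂ)
    (π : Representation ℂ (GL (Fin n) E) V) : Prop :=
  ∃ ℓ : V →ₗ[ℂ] ℂ, ℓ ≠ 0 ∧ ∀ u : GL (Fin n) E, IsUniUp u → ∀ v, ℓ (π u v) = ψ u * ℓ v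

/-- Membership in the `ψ`-Whittaker model `W(π,ψ)` of an irreducible generic representation
`π`: the function is left `(N(E),ψ)`-equivariant, and it lies in the `π`-isotypic component of
the right regular representation (cut out by the projector attached to the character of `π`). -/
def InWhittakerModel {V : Type*} [AddCommGroup V] [Module ℂ V] (ψ : GL (Fin n) E → ℂ)
    (π : Representation ℂ (GL (Fin n) E) V) (W : GL (Fin n) E → ℂ) : Prop :=
  (∀ u g : GL (Fin n) E, IsUniUp u → W (u * g) = ψ u * W g) ∧
  (∀ x : GL (Fin n) E,
    ((Module.finrank ℂ V : ℂ) / (Fintype.card (GL (Fin n) E) : ℂ)) *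
      ∑ g : GL (Fin n) E, repChar π g⁻¹ * W (x * g) = W x)

/-- `π` is a base change lift of the representation `ρ` of the fixed points of `κ`:
there is an intertwiner `T` between `π` and `π ∘ κ` such that
`Trace(π(g) ∘ T) = χ_ρ(g ⬝ κ(g))`, the latter being evaluated by conjugating `g ⬝ κ(g)`
into the fixed point subgroup. -/
def IsBaseChange {V : Type*} [AddCommGroup V] [Module ℂ V] {Vρ : Type*} [AddCommGroup Vρ]
    [Module ℂ Vρ] (κ : GL (Fin n) E →* GL (Fin n) E)
    (π : Representation ℂ (GL (Fin n) E) V)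
    (ρ : Representation ℂ ↥(fixedSubgroup κ) Vρ) : Prop :=
  ∃ T : V →ₗ[ℂ] V,
    (∀ g : GL (Fin n) E, π g ∘ₗ T = T ∘ₗ π (κ g)) ∧
    ∀ (g x : GL (Fin n) E) (h : ↥(fixedSubgroup κ)),
      g * κ g = x * (h : GL (Fin n) E) * x⁻¹ →
      LinearMap.trace ℂ V (π g ∘ₗ T) = repChar ρ h

/-- The mirabolic condition: the last row is `(0,…,0,1)`. -/
def IsMirabolic (g : GL (Fin n) E) : Prop :=
  ∀ i j : Fin n, n - 1 ≤ (i : ℕ) →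
    (g : Matrix (Fin n) (Fin n) E) i j = (1 : Matrix (Fin n) (Fin n) E) i j

instance : DecidablePred (IsMirabolic (n := n) (E := E)) := fun g => by
  unfold IsMirabolic; exact @Fintype.decidableForallFintype _ _ (fun _ => Fintype.decidableForallFintype) _

/-!
For `u ∈ N(E)`, the twisted conjugation `g ↦ κ(u)⁻¹ g u` permutes `X_κ` because `κ` is an
involution; substituting it turns `∑_{X_κ} W(g u)` into `∑_{X_κ} W(κ(u) g)`, and
`W(κ(u) g) = ψ(κ(u)) W(g) = ψ(u) W(g)` since `κ` preserves `N(E)` and `ψ^κ = ψ`.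
-/

section NormOne

variable {G : Type*} [Group G] (κ : G →* G)

lemma mul_map_twistedConj_eq_one {g u : G} (hu : κ (κ u) = u) (hg : g * κ g = 1) :
    (κ u)⁻¹ * g * u * κ ((κ u)⁻¹ * g * u) = 1 := by
  rw [_root_.map_mul, _root_.map_mul, _root_.map_inv, hu]
  calc (κ u)⁻¹ * g * u * (u⁻¹ * κ g * κ u) = (κ u)⁻¹ * (g * κ g) * κ u := by group
    _ = 1 := by rw [hg]; group

lemma sum_mul_map_eq_one_mul_right [Fintype G] [DecidableEq G] {M : Type*} [AddCommMonoid M]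
    (f : G → M) {u : G} (hu : κ (κ u) = u) :
    ∑ g ∈ univ.filter (fun g => g * κ g = 1), f (g * u) =
      ∑ g ∈ univ.filter (fun g => g * κ g = 1), f (κ u * g) := by
  have hu' : κ (κ u⁻¹) = u⁻¹ := by rw [_root_.map_inv, _root_.map_inv, hu]
  refine Finset.sum_nbij' (fun g => (κ u)⁻¹ * g * u) (fun g => κ u * g * u⁻¹) ?_ ?_ ?_ ?_ ?_
  · intro g hg
    simpa using mul_map_twistedConj_eq_one κ hu (by simpa using hg)
  · intro g hg
    simpa [_root_.map_inv] using mul_map_twistedConj_eq_one κ hu' (by simpa using hg)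
  · intro g _; group
  · intro g _; group
  · intro g _; simp only [← mul_assoc, mul_inv_cancel, one_mul]

end NormOne

lemma isUniUp_one : IsUniUp (1 : GL (Fin n) E) :=
  ⟨fun i j hij => by simp [hij.ne'], fun i => by simp⟩

lemma IsUniUp.mul {u v : GL (Fin n) E} (hu : IsUniUp u) (hv : IsUniUp v) :
    IsUniUp (u * v) := by
  constructor
  · intro i j hij
    rw [Units.val_mul, Matrix.mul_apply]
    refine Finset.sum_eq_zero fun k _ => ?_
    rcases lt_or_ge k i with hk | hk
    · rw [hu.1 i k hk, zero_mul]
    · rw [hv.1 k j (hij.trans_le hk), mul_zero]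
  · intro i
    rw [Units.val_mul, Matrix.mul_apply, Finset.sum_eq_single i]
    · rw [hu.2 i, hv.2 i, one_mul]
    · intro k _ hk
      rcases hk.lt_or_gt with h | h
      · rw [hu.1 i k h, zero_mul]
      · rw [hv.1 k i h, mul_zero]
    · simp

def uniUpSubmonoid (n : ℕ) (E : Type*) [Field E] [Fintype E] [DecidableEq E] :
    Submonoid (GL (Fin n) E) where
  carrier := {g | IsUniUp g}
  mul_mem' := IsUniUp.mul
  one_mem' := isUniUp_one

lemma IsUniUp.inv {u : GL (Fin n) E} (hu : IsUniUp u) : IsUniUp u⁻¹ :=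
  Submonoid.powers_le.mpr (show u ∈ uniUpSubmonoid n E from hu)
    (mem_powers_iff_mem_zpowers.mpr (inv_mem (Subgroup.mem_zpowers u)))

lemma entrywiseHom_apply (σ₀ : E ≃+* E) (g : GL (Fin n) E) (i j : Fin n) :
    (entrywiseHom n σ₀ g : Matrix (Fin n) (Fin n) E) i j = σ₀ ((g : Matrix (Fin n) (Fin n) E) i j) :=
  rfl

lemma Jmat_mul_mul_Jmat_apply (M : Matrix (Fin n) (Fin n) E) (i j : Fin n) :
    (Jmat n E * M * Jmat n E) i j = M i.rev j.rev := by
  simp [Jmat, Matrix.mul_apply, eq_comm (a := j), Fin.rev_eq_iff]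

lemma tauHom_apply (σ₀ : E ≃+* E) (g : GL (Fin n) E) (i j : Fin n) :
    (tauHom n σ₀ g : Matrix (Fin n) (Fin n) E) i j =
      σ₀ (((g⁻¹ : GL (Fin n) E) : Matrix (Fin n) (Fin n) E) j.rev i.rev) := by
  change (Jmat n E * (entrywiseHom n σ₀ g⁻¹ : Matrix (Fin n) (Fin n) E)ᵀ * Jmat n E) i j = _
  rw [Jmat_mul_mul_Jmat_apply]
  rfl

lemma IsUniUp.entrywiseHom (σ₀ : E ≃+* E) {u : GL (Fin n) E} (hu : IsUniUp u) :
    IsUniUp (entrywiseHom n σ₀ u) :=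
  ⟨fun i j hij => by rw [entrywiseHom_apply, hu.1 i j hij, map_zero],
    fun i => by rw [entrywiseHom_apply, hu.2 i, map_one]⟩

lemma IsUniUp.tauHom (σ₀ : E ≃+* E) {u : GL (Fin n) E} (hu : IsUniUp u) :
    IsUniUp (tauHom n σ₀ u) :=
  ⟨fun i j hij => by rw [tauHom_apply, hu.inv.1 j.rev i.rev (Fin.rev_lt_rev.mpr hij), map_zero],
    fun i => by rw [tauHom_apply, hu.inv.2 i.rev, map_one]⟩

lemma entrywiseHom_entrywiseHom {σ₀ : E ≃+* E} (hσ : Function.Involutive σ₀)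
    (g : GL (Fin n) E) : entrywiseHom n σ₀ (entrywiseHom n σ₀ g) = g := by
  ext i j
  exact hσ _

lemma tauHom_tauHom {σ₀ : E ≃+* E} (hσ : Function.Involutive σ₀) (g : GL (Fin n) E) :
    tauHom n σ₀ (tauHom n σ₀ g) = g := by
  ext i j
  rw [tauHom_apply, ← _root_.map_inv, tauHom_apply, inv_inv, Fin.rev_rev, Fin.rev_rev, hσ]

lemma pow_pow_eq_self_of_card_eq_sq {q : ℕ} (hcard : Fintype.card E = q ^ 2) (x : E) :
    (x ^ q) ^ q = x := by
  rw [← pow_mul, ← sq, ← hcard, FiniteField.pow_card]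

theorem mu_is_whittaker_functional_general {n q : ℕ} {E : Type*} [Field E] [Fintype E] [DecidableEq E]
    (hcard : Fintype.card E = q ^ 2)
    (σ₀ : E ≃+* E) (hσ₀ : ∀ x : E, σ₀ x = x ^ q)
    (ι κ : GL (Fin n) E →* GL (Fin n) E)
    (hικ : (ι = entrywiseHom n σ₀ ∧ κ = tauHom n σ₀) ∨
           (ι = tauHom n σ₀ ∧ κ = entrywiseHom n σ₀))
    {V : Type*} [AddCommGroup V] [Module ℂ V]
    (π : Representation ℂ (GL (Fin n) E) V)
    (ψ : GL (Fin n) E → ℂ)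
    (hψκ : ∀ u : GL (Fin n) E, IsUniUp u → ψ (κ u) = ψ u)
    (W : GL (Fin n) E → ℂ) (hW : InWhittakerModel ψ π W)
    (u : GL (Fin n) E) (hu : IsUniUp u) :
    ((fixFinset ι).card : ℂ)⁻¹ * ∑ g ∈ normOneFinset κ, W (g * u) =
      ψ u * (((fixFinset ι).card : ℂ)⁻¹ * ∑ g ∈ normOneFinset κ, W g) := by
  have hσ : Function.Involutive σ₀ := fun x => by
    rw [hσ₀, hσ₀, pow_pow_eq_self_of_card_eq_sq hcard]
  obtain ⟨hκκ, hκN⟩ : (∀ g, κ (κ g) = g) ∧ ∀ v : GL (Fin n) E, IsUniUp v → IsUniUp (κ v) := by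
    rcases hικ with ⟨-, rfl⟩ | ⟨-, rfl⟩
    · exact ⟨tauHom_tauHom hσ, fun v hv => hv.tauHom σ₀⟩
    · exact ⟨entrywiseHom_entrywiseHom hσ, fun v hv => hv.entrywiseHom σ₀⟩
  have hsum : ∑ g ∈ normOneFinset κ, W (g * u) = ψ u * ∑ g ∈ normOneFinset κ, W g := by
    rw [normOneFinset, sum_mul_map_eq_one_mul_right κ W (hκκ u), Finset.mul_sum]
    refine Finset.sum_congr rfl fun g _ => ?_
    rw [hW.1 _ _ (hκN u hu), hψκ u hu]
  rw [hsum, mul_left_comm]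

theorem mu_is_whittaker_functional {n q : ℕ} {E : Type*} [Field E] [Fintype E] [DecidableEq E]
    (hcard : Fintype.card E = q ^ 2)
    (σ₀ : E ≃+* E) (hσ₀ : ∀ x : E, σ₀ x = x ^ q)
    (ι κ : GL (Fin n) E →* GL (Fin n) E)
    (hικ : (ι = entrywiseHom n σ₀ ∧ κ = tauHom n σ₀) ∨
           (ι = tauHom n σ₀ ∧ κ = entrywiseHom n σ₀))
    {V : Type*} [AddCommGroup V] [Module ℂ V] [FiniteDimensional ℂ V]
    (π : Representation ℂ (GL (Fin n) E) V)
    (hirr : IsIrreducibleRep π)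
    (ψ : GL (Fin n) E → ℂ) (hψ : IsNondegChar ψ)
    (hψκ : ∀ u : GL (Fin n) E, IsUniUp u → ψ (κ u) = ψ u)
    (hgen : IsGeneric ψ π)
    (W : GL (Fin n) E → ℂ) (hW : InWhittakerModel ψ π W)
    (u : GL (Fin n) E) (hu : IsUniUp u) :
    ((fixFinset ι).card : ℂ)⁻¹ * ∑ g ∈ normOneFinset κ, W (g * u) =
      ψ u * (((fixFinset ι).card : ℂ)⁻¹ * ∑ g ∈ normOneFinset κ, W g) :=
  mu_is_whittaker_functional_general hcard σ₀ hσ₀ ι κ hικ π ψ hψκ W hW u hu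

end TestVectors
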